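/- arXiv:1705.10419 — 5 statements merged into one kernel-verified Lean document; each statement's English description precedes it below -/
import Mathlib

section
/- Let ζ_1,…,ζ_n be distinct, p_1,…,p_n arbitrary, and t = ħ^{1/2} invertible in a field. Define the tRS Lax matrix L by L_{ij} = ( ∏_{k ≠ j} (t^{-1}ζ_i − t ζ_k) / ∏_{k ≠ i} (ζ_i − ζ_k) ) p_j. Then det(u·I − L) = Σ_{r=0}^n (−1)^r H_r u^{n−r}, where H_r = Σ_{I ⊂ {1,…,n}, |I| = r} ∏_{i ∈ I, j ∉ I} ((t^{-1}ζ_i − t ζ_j)/(ζ_i − ζ_j)) · ∏_{k ∈ I} p_k. -/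
open Finset

/-- The trigonometric Ruijsenaars–Schneider Lax matrix
L_{ij} = (∏_{k≠j}(t⁻¹ζ_i − tζ_k) / ∏_{k≠i}(ζ_i − ζ_k)) p_j, with t = ħ^{1/2}. -/
noncomputable def tRSLax {K : Type*} [Field K] (n : ℕ) (ζ p : Fin n → K) (t : K) :
    Matrix (Fin n) (Fin n) K :=
  Matrix.of fun i j =>
    ((∏ k ∈ univ.erase j, (t⁻¹ * ζ i - t * ζ k)) /
      (∏ k ∈ univ.erase i, (ζ i - ζ k))) * p j

/-- The tRS Hamiltonians H_r. -/
noncomputable def tRSHam {K : Type*} [Field K] (n : ℕ) (ζ p : Fin n → K) (t : K) (r : ℕ) : K :=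
  ∑ I ∈ powersetCard r (univ : Finset (Fin n)),
    (∏ i ∈ I, ∏ j ∈ Iᶜ, ((t⁻¹ * ζ i - t * ζ j) / (ζ i - ζ j))) * ∏ k ∈ I, p k

/-!
The coefficient of `u ^ (n - r)` in `det (u - L)` is `(-1) ^ r` times the sum of the principal
`r × r` minors of `L`. Write `L = C * diagonal p`, where `C` is `L` at unit momenta. The principal
submatrix of `C` on `I` is `diagonal (∏_{j ∉ I} (t⁻¹ζ_i - tζ_j) / (ζ_i - ζ_j))` times the matrix `C`
built from the points `(ζ_i)_{i ∈ I}`, so everything reduces to `det C = 1` for any number of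
distinct points. For that, `C = diagonal (d⁻¹) * [P_j (t⁻¹ζ_i)]` with `d_i = ∏_{k ≠ i} (ζ_i - ζ_k)`
and `P_j = ∏_{k ≠ j} (X - tζ_k)`. Factoring `[P_j (x_i)] = vandermonde x * coefficients` at
`x = t⁻¹ζ` and at `x = tζ`, where the latter matrix is `diagonal (t ^ (n - 1) d_j)`, and using
`det (vandermonde (c • ζ)) = c ^ (n (n - 1) / 2) * det (vandermonde ζ)`, the powers of `t` cancel
and `det [P_j (t⁻¹ζ_i)] = ∏ d_i`.
-/

open Polynomial

namespace Finset

variable {ι κ M : Type*} [Fintype ι] [DecidableEq ι] [Fintype κ] [DecidableEq κ] [CommMonoid M]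

theorem prod_univ_erase_equiv (e : κ ≃ ι) (f : ι → M) (j : κ) :
    ∏ k ∈ univ.erase (e j), f k = ∏ l ∈ univ.erase j, f (e l) :=
  (prod_equiv e (by simp [e.injective.eq_iff]) fun _ _ => rfl).symm

theorem prod_univ_erase_coe {s : Finset ι} (f : ι → M) (j : s) :
    ∏ k ∈ univ.erase (j : ι), f k = (∏ l ∈ univ.erase j, f l) * ∏ k ∈ sᶜ, f k := by
  have hsplit : univ.erase (j : ι) = s.erase j ∪ sᶜ := by
    rw [← union_compl s, erase_union_distrib, erase_eq_of_notMem (s := sᶜ) (by simp)]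
  rw [hsplit, prod_union (disjoint_compl_right.mono_left (erase_subset _ _)), univ_eq_attach,
    prod_erase_attach]

end Finset

theorem prod_prod_erase_smul_sub {R : Type*} [CommRing R] {m : ℕ} (c : R) (v : Fin m → R) :
    ∏ j, ∏ k ∈ univ.erase j, ((c • v) j - (c • v) k) =
      c ^ (m * (m - 1)) * ∏ j, ∏ k ∈ univ.erase j, (v j - v k) := by
  simp only [Pi.smul_apply, smul_eq_mul, ← mul_sub, prod_mul_distrib, prod_const,
    card_erase_of_mem (mem_univ _), card_univ, Fintype.card_fin, ← pow_mul, mul_comm (m - 1)]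

namespace Matrix

theorem det_scalar_sub_eq_sum_minors {ι R : Type*} [Fintype ι] [DecidableEq ι] [CommRing R]
    (M : Matrix ι ι R) (u : R) :
    (scalar ι u - M).det = ∑ r ∈ range (Fintype.card ι + 1),
      (-1) ^ r * (∑ s ∈ powersetCard r univ, (M.submatrix (Subtype.val : s → ι) Subtype.val).det) *
        u ^ (Fintype.card ι - r) := by
  nontriviality R
  rw [← eval_charpoly, eval_eq_sum_range, charpoly_natDegree_eq_dim, ← sum_range_reflect]
  refine sum_congr rfl fun r hr => ?_
  have hr' : r ≤ Fintype.card ι := Nat.lt_succ_iff.1 (mem_range.1 hr)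
  rw [show Fintype.card ι + 1 - 1 - r = Fintype.card ι - r by omega,
    charpoly_coeff_eq_sum_minors M r hr']

section Vandermonde

variable {R : Type*} [CommRing R] {m : ℕ}

theorem eval_eq_vandermonde_mul_coeff (v : Fin m → R) (P : Fin m → R[X])
    (hP : ∀ j, (P j).natDegree < m) :
    of (fun i j => (P j).eval (v i)) = vandermonde v * of fun (k j : Fin m) => (P j).coeff k := by
  ext i j
  rw [mul_apply, of_apply, eval_eq_sum_range' (hP j), ← Fin.sum_univ_eq_sum_range]
  simp [vandermonde_apply, mul_comm]

theorem det_prod_erase_sub_mul_det_vandermonde (x y : Fin m → R) :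
    (of fun i j => ∏ k ∈ univ.erase j, (x i - y k)).det * (vandermonde y).det =
      (vandermonde x).det * ∏ j, ∏ k ∈ univ.erase j, (y j - y k) := by
  nontriviality R
  set P : Fin m → R[X] := fun j => ∏ k ∈ univ.erase j, (X - C (y k))
  have hP : ∀ j, (P j).natDegree < m := fun j => by
    simp [P, card_erase_of_mem, j.pos]
  have hxP : (of fun i j => ∏ k ∈ univ.erase j, (x i - y k)) = of fun i j => (P j).eval (x i) := by
    ext i j
    simp [P, eval_prod]
  have hyP : (of fun i j => (P j).eval (y i)) =
      diagonal fun j => ∏ k ∈ univ.erase j, (y j - y k) := by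
    ext i j
    rcases eq_or_ne i j with rfl | hij
    · simp [P, eval_prod]
    · rw [diagonal_apply_ne _ hij, of_apply, eval_prod]
      exact prod_eq_zero (mem_erase.2 ⟨hij, mem_univ i⟩) (by simp)
  rw [hxP, eval_eq_vandermonde_mul_coeff x P hP, det_mul, mul_right_comm, mul_assoc, ← det_mul,
    ← eval_eq_vandermonde_mul_coeff y P hP, hyP, det_diagonal]

theorem vandermonde_smul (c : R) (v : Fin m → R) :
    vandermonde (c • v) = vandermonde v * diagonal fun j : Fin m => c ^ (j : ℕ) := by
  ext i j
  simp [vandermonde_apply, mul_pow, mul_comm]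

theorem det_vandermonde_smul (c : R) (v : Fin m → R) :
    (vandermonde (c • v)).det = c ^ (∑ j : Fin m, (j : ℕ)) * (vandermonde v).det := by
  rw [vandermonde_smul, det_mul, det_diagonal, prod_pow_eq_pow_sum, mul_comm]

end Vandermonde

end Matrix

open Matrix

section LaxAtUnitMomenta

variable {K ι κ : Type*} [Field K] [Fintype ι] [DecidableEq ι] [Fintype κ] [DecidableEq κ]

/-- `tRSLax` with all momenta equal to `1`, over an arbitrary finite index type, so that its
principal submatrices are again of this form up to a diagonal factor. -/
noncomputable def tRSLaxCore (x : ι → K) (t : K) : Matrix ι ι K :=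
  of fun i j => (∏ k ∈ univ.erase j, (t⁻¹ * x i - t * x k)) / ∏ k ∈ univ.erase i, (x i - x k)

theorem det_tRSLaxCore_fin {m : ℕ} {x : Fin m → K} (hx : Function.Injective x) {t : K}
    (ht : t ≠ 0) : (tRSLaxCore x t).det = 1 := by
  set d : Fin m → K := fun i => ∏ k ∈ univ.erase i, (x i - x k)
  have hd : ∀ i, d i ≠ 0 := fun i =>
    prod_ne_zero_iff.2 fun k hk => sub_ne_zero.2 fun h => (mem_erase.1 hk).1 (hx h).symm
  have hV : (vandermonde x).det ≠ 0 := det_vandermonde_ne_zero_iff.2 hx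
  have hS : (∑ j : Fin m, (j : ℕ)) * 2 = m * (m - 1) := by
    rw [Fin.sum_univ_eq_sum_range (fun j => j), sum_range_id_mul_two]
  have hA : (of fun i j => ∏ k ∈ univ.erase j, ((t⁻¹ • x) i - (t • x) k)).det = ∏ i, d i := by
    have key := det_prod_erase_sub_mul_det_vandermonde (t⁻¹ • x) (t • x)
    rw [det_vandermonde_smul, det_vandermonde_smul, prod_prod_erase_smul_sub, ← hS] at key
    apply mul_right_cancel₀ (mul_ne_zero (pow_ne_zero _ ht) hV)
    rw [key, inv_pow, pow_mul]
    field_simp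
    rfl
  have hcore : tRSLaxCore x t = diagonal (fun i => (d i)⁻¹) *
      of fun i j => ∏ k ∈ univ.erase j, ((t⁻¹ • x) i - (t • x) k) := by
    ext i j
    simp [tRSLaxCore, d, div_eq_inv_mul]
  rw [hcore, det_mul, det_diagonal, hA, prod_inv_distrib,
    inv_mul_cancel₀ (prod_ne_zero_iff.2 fun i _ => hd i)]

theorem tRSLaxCore_submatrix_equiv (x : ι → K) (t : K) (e : κ ≃ ι) :
    (tRSLaxCore x t).submatrix e e = tRSLaxCore (x ∘ e) t := by
  ext i j
  simp only [tRSLaxCore, submatrix_apply, of_apply, prod_univ_erase_equiv, Function.comp_apply]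

theorem det_tRSLaxCore {x : ι → K} (hx : Function.Injective x) {t : K} (ht : t ≠ 0) :
    (tRSLaxCore x t).det = 1 := by
  rw [← det_submatrix_equiv_self (Fintype.equivFin ι).symm, tRSLaxCore_submatrix_equiv]
  exact det_tRSLaxCore_fin (hx.comp (Fintype.equivFin ι).symm.injective) ht

theorem tRSLaxCore_submatrix_coe (x : ι → K) (t : K) (s : Finset ι) :
    (tRSLaxCore x t).submatrix ((↑) : s → ι) (↑) =
      diagonal (fun i : s => ∏ k ∈ sᶜ, (t⁻¹ * x i - t * x k) / (x i - x k)) *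
        tRSLaxCore (fun i : s => x i) t := by
  ext i j
  simp only [tRSLaxCore, submatrix_apply, of_apply, diagonal_mul, prod_univ_erase_coe,
    prod_div_distrib]
  ring

theorem tRSLax_eq_tRSLaxCore_mul_diagonal (n : ℕ) (ζ p : Fin n → K) (t : K) :
    tRSLax n ζ p t = tRSLaxCore ζ t * diagonal p := by
  ext i j
  simp [tRSLax, tRSLaxCore]

theorem det_tRSLax_submatrix {n : ℕ} {ζ : Fin n → K} (hζ : Function.Injective ζ) (p : Fin n → K)
    {t : K} (ht : t ≠ 0) (s : Finset (Fin n)) :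
    ((tRSLax n ζ p t).submatrix ((↑) : s → Fin n) (↑)).det =
      (∏ i ∈ s, ∏ j ∈ sᶜ, ((t⁻¹ * ζ i - t * ζ j) / (ζ i - ζ j))) * ∏ k ∈ s, p k := by
  have hmul : (tRSLax n ζ p t).submatrix ((↑) : s → Fin n) (↑) =
      (tRSLaxCore ζ t).submatrix (↑) (↑) * diagonal fun k : s => p k := by
    ext i j
    simp [tRSLax_eq_tRSLaxCore_mul_diagonal]
  rw [hmul, tRSLaxCore_submatrix_coe, det_mul, det_mul, det_diagonal, det_diagonal,
    det_tRSLaxCore (x := fun i : s => ζ i) (hζ.comp Subtype.val_injective) ht, mul_one,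
    prod_coe_sort s fun i => ∏ k ∈ sᶜ, (t⁻¹ * ζ i - t * ζ k) / (ζ i - ζ k), prod_coe_sort]

end LaxAtUnitMomenta

theorem stmt4_general {K : Type*} [Field K] (n : ℕ) (ζ p : Fin n → K) (t : K)
    (hζ : Function.Injective ζ) (ht : t ≠ 0) (u : K) :
    (u • (1 : Matrix (Fin n) (Fin n) K) - tRSLax n ζ p t).det
      = ∑ r ∈ Finset.range (n + 1), (-1 : K) ^ r * tRSHam n ζ p t r * u ^ (n - r) := by
  rw [smul_one_eq_diagonal, ← scalar_apply, det_scalar_sub_eq_sum_minors, Fintype.card_fin]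
  refine sum_congr rfl fun r _ => ?_
  rw [tRSHam]
  congr 2
  exact sum_congr rfl fun s _ => det_tRSLax_submatrix hζ p ht s

/-- det(u·I − L) = Σ_{r=0}^n (−1)^r H_r u^{n−r}. -/
theorem stmt4 {K : Type*} [Field K] (n : ℕ) (ζ p : Fin n → K) (t : K)
    (hζ : Function.Injective ζ) (hζ0 : ∀ i, ζ i ≠ 0) (ht : t ≠ 0) (u : K) :
    (u • (1 : Matrix (Fin n) (Fin n) K) - tRSLax n ζ p t).det
      = ∑ r ∈ Finset.range (n + 1), (-1 : K) ^ r * tRSHam n ζ p t r * u ^ (n - r) :=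
  stmt4_general n ζ p t hζ ht u
end

section
/- Let Q_{i−1}, Q_i, Q_{i+1}, Q̃_i be polynomials over a field containing invertible elements ζ̃_i, ζ̃_{i+1} with ζ̃_i ≠ ζ̃_{i+1}, and an invertible element h = ħ^{1/2}. Denote by P^{(m)}(u) = P(h^{-m} u) the shifted polynomial. Suppose the QQ̃-relation ζ̃_{i+1} Q_i^{(1)} Q̃_i^{(−1)} − ζ̃_i Q_i^{(−1)} Q̃_i^{(1)} = (ζ̃_{i+1} − ζ̃_i) Q_{i−1} Q_{i+1} holds. Then at every root σ of Q_i with Q_i^{(2)}(σ) ≠ 0, Q_i^{(−2)}(σ) ≠ 0, Q_{i−1}^{(±1)}(σ) ≠ 0, Q_{i+1}^{(−1)}(σ) ≠ 0, Q̃_i(σ) ≠ 0, the Bethe-type relation (ζ̃_i/ζ̃_{i+1}) · (Q_{i−1}^{(1)}(σ) Q_i^{(−2)}(σ) Q_{i+1}^{(1)}(σ)) / (Q_{i−1}^{(−1)}(σ) Q_i^{(2)}(σ) Q_{i+1}^{(−1)}(σ)) = −1 holds. -/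
/-!
Evaluating the QQ̃-relation at `h⁻¹ σ` and at `h σ` kills one of its two terms on the left, since
both times a factor `Q_i(σ) = 0` appears. The two surviving identities express
`Q_{i-1} Q_{i+1}` at `h^{∓1} σ` through `Q_i(h^{∓2} σ) Q̃_i(σ)`; dividing one by the other, the
common factor `(ζ̃_{i+1} - ζ̃_i) Q̃_i(σ)` cancels and the Bethe relation remains.
-/

open Polynomial

section QQtRelation

variable {K : Type*} [Field K]

def IsQQtRelation (h z1 z2 : K) (Qm Qi Qp Qt : K[X]) : Prop :=
  ∀ u : K, z2 * Qi.eval (h⁻¹ * u) * Qt.eval (h * u) - z1 * Qi.eval (h * u) * Qt.eval (h⁻¹ * u)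
    = (z2 - z1) * Qm.eval u * Qp.eval u

variable {h z1 z2 σ : K} {Qm Qi Qp Qt : K[X]}

namespace IsQQtRelation

theorem eval_inv_mul_of_isRoot (hQQ : IsQQtRelation h z1 z2 Qm Qi Qp Qt) (hh : h ≠ 0)
    (hσ : Qi.eval σ = 0) :
    (z2 - z1) * Qm.eval (h⁻¹ * σ) * Qp.eval (h⁻¹ * σ) = z2 * Qi.eval (h⁻¹ ^ 2 * σ) * Qt.eval σ := by
  have := hQQ (h⁻¹ * σ)
  rw [mul_inv_cancel_left₀ hh, ← mul_assoc, ← sq, hσ] at this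
  linear_combination -this

theorem eval_mul_of_isRoot (hQQ : IsQQtRelation h z1 z2 Qm Qi Qp Qt) (hh : h ≠ 0)
    (hσ : Qi.eval σ = 0) :
    (z2 - z1) * Qm.eval (h * σ) * Qp.eval (h * σ) = -(z1 * Qi.eval (h ^ 2 * σ) * Qt.eval σ) := by
  have := hQQ (h * σ)
  rw [inv_mul_cancel_left₀ hh, ← mul_assoc, ← sq, hσ] at this
  linear_combination -this

theorem bethe_of_isRoot (hQQ : IsQQtRelation h z1 z2 Qm Qi Qp Qt) (hh : h ≠ 0) (hz : z1 ≠ z2)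
    (hσ : Qi.eval σ = 0) :
    z1 * (Qm.eval (h⁻¹ * σ) * Qi.eval (h ^ 2 * σ) * Qp.eval (h⁻¹ * σ))
      = -(z2 * (Qm.eval (h * σ) * Qi.eval (h⁻¹ ^ 2 * σ) * Qp.eval (h * σ))) := by
  have hz' : z2 - z1 ≠ 0 := sub_ne_zero.mpr hz.symm
  refine mul_left_cancel₀ hz' ?_
  linear_combination z1 * Qi.eval (h ^ 2 * σ) * hQQ.eval_inv_mul_of_isRoot hh hσ
    + z2 * Qi.eval (h⁻¹ ^ 2 * σ) * hQQ.eval_mul_of_isRoot hh hσ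

end IsQQtRelation

end QQtRelation

theorem stmt7_general {K : Type*} [Field K] (h : K) (hh : h ≠ 0)
    (z1 z2 : K) (hz2 : z2 ≠ 0) (hz : z1 ≠ z2)
    (Qm Qi Qp Qt : Polynomial K)
    (hQQ : ∀ u : K,
        z2 * Qi.eval (h⁻¹ * u) * Qt.eval (h * u)
      - z1 * Qi.eval (h * u) * Qt.eval (h⁻¹ * u)
      = (z2 - z1) * Qm.eval u * Qp.eval u)
    (σ : K) (hσ : Qi.eval σ = 0)
    (h2 : Qi.eval ((h⁻¹) ^ 2 * σ) ≠ 0)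
    (hmm : Qm.eval (h * σ) ≠ 0)
    (hpm : Qp.eval (h * σ) ≠ 0) :
    (z1 / z2) *
      ((Qm.eval (h⁻¹ * σ) * Qi.eval (h ^ 2 * σ) * Qp.eval (h⁻¹ * σ)) /
        (Qm.eval (h * σ) * Qi.eval ((h⁻¹) ^ 2 * σ) * Qp.eval (h * σ)))
    = -1 := by
  have hden : z2 * (Qm.eval (h * σ) * Qi.eval (h⁻¹ ^ 2 * σ) * Qp.eval (h * σ)) ≠ 0 :=
    mul_ne_zero hz2 (mul_ne_zero (mul_ne_zero hmm h2) hpm)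
  rw [← mul_div_mul_comm, IsQQtRelation.bethe_of_isRoot hQQ hh hz hσ, neg_div, div_self hden]

/-- The QQ̃-relation implies the Bethe-type relation at roots of Q_i.
Here `h` plays ħ^{1/2}, `z1` plays ζ̃_i, `z2` plays ζ̃_{i+1}, `Qm` is Q_{i−1},
`Qi` is Q_i, `Qp` is Q_{i+1}, `Qt` is Q̃_i; the shift is P^{(m)}(u) = P(h^{−m}u). -/
theorem stmt7 {K : Type*} [Field K] (h : K) (hh : h ≠ 0)
    (z1 z2 : K) (hz1 : z1 ≠ 0) (hz2 : z2 ≠ 0) (hz : z1 ≠ z2)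
    (Qm Qi Qp Qt : Polynomial K)
    (hQQ : ∀ u : K,
        z2 * Qi.eval (h⁻¹ * u) * Qt.eval (h * u)
      - z1 * Qi.eval (h * u) * Qt.eval (h⁻¹ * u)
      = (z2 - z1) * Qm.eval u * Qp.eval u)
    (σ : K) (hσ : Qi.eval σ = 0)
    (h2 : Qi.eval ((h⁻¹) ^ 2 * σ) ≠ 0)
    (hm2 : Qi.eval (h ^ 2 * σ) ≠ 0)
    (hmp : Qm.eval (h⁻¹ * σ) ≠ 0)
    (hmm : Qm.eval (h * σ) ≠ 0)
    (hpm : Qp.eval (h * σ) ≠ 0)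
    (hQt : Qt.eval σ ≠ 0) :
    (z1 / z2) *
      ((Qm.eval (h⁻¹ * σ) * Qi.eval (h ^ 2 * σ) * Qp.eval (h⁻¹ * σ)) /
        (Qm.eval (h * σ) * Qi.eval ((h⁻¹) ^ 2 * σ) * Qp.eval (h * σ)))
    = -1 :=
  stmt7_general h hh z1 z2 hz2 hz Qm Qi Qp Qt hQQ σ hσ h2 hmm hpm
end

section
/- For 1 ≤ j ≤ n, define the j×j matrices M_{i_1,…,i_j} with rows labeled by indices i_1 < … < i_j and (a,b)-entry ζ_{i_a}^{b−1} q_{i_a}^{(j+1−2b)}(u), where q_i(u) = u − p_i and q^{(m)}(u) = q(ħ^{−m/2}u), and the Vandermonde matrices V_{i_1,…,i_j} with (a,b)-entry ζ_{i_a}^{b−1}. Define Q_j(u) = det(M_{1,…,j})/det(V_{1,…,j}) and Q̃_j(u) = det(M_{1,…,j−1,j+1})/det(V_{1,…,j−1,j+1}). Then for every 1 ≤ j ≤ n−1 the relation ζ_{j+1} Q_j^{(1)} Q̃_j^{(−1)} − ζ_j Q_j^{(−1)} Q̃_j^{(1)} = (ζ_{j+1} − ζ_j) Q_{j−1} Q_{j+1}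 holds, where Q_0 = 1. -/
open Finset

/-- det of the matrix M_{i_1,…,i_j}(u) with (a,b)-entry ζ_{i_a}^{b} q_{i_a}^{(j−1−2b)}(u)
(0-based b), where q_i(u) = u − p_i and q^{(m)}(u) = h^{−m}u − p_i, h = ħ^{1/2}. -/
noncomputable def Mdet {K : Type*} [Field K] {n : ℕ} (ζ p : Fin n → K) (h : K)
    (j : ℕ) (row : Fin j → Fin n) (u : K) : K :=
  Matrix.det (Matrix.of fun a b : Fin j =>
    ζ (row a) ^ (b : ℕ) *
      (h ^ (-((j : ℤ) - 1 - 2 * ((b : ℕ) : ℤ))) * u - p (row a)))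

/-- det of the Vandermonde matrix V_{i_1,…,i_j}. -/
noncomputable def Vdet {K : Type*} [Field K] {n : ℕ} (ζ : Fin n → K)
    (j : ℕ) (row : Fin j → Fin n) : K :=
  Matrix.det (Matrix.of fun a b : Fin j => ζ (row a) ^ (b : ℕ))

/-- Q_j(u) = det M_{1,…,j} / det V_{1,…,j}. -/
noncomputable def Qfun {K : Type*} [Field K] {n : ℕ} (ζ p : Fin n → K) (h : K)
    (j : ℕ) (hj : j ≤ n) (u : K) : K :=
  Mdet ζ p h j (fun a => ⟨a, lt_of_lt_of_le a.isLt hj⟩) u /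
    Vdet ζ j (fun a => ⟨a, lt_of_lt_of_le a.isLt hj⟩)

/-- Q̃_j(u) = det M_{1,…,j−1,j+1} / det V_{1,…,j−1,j+1}. -/
noncomputable def Qtfun {K : Type*} [Field K] {n : ℕ} (ζ p : Fin n → K) (h : K)
    (j : ℕ) (hj : j < n) (u : K) : K :=
  Mdet ζ p h j
    (fun a => if (a : ℕ) < j - 1 then ⟨a, by have := a.isLt; omega⟩ else ⟨j, hj⟩) u /
  Vdet ζ j
    (fun a => if (a : ℕ) < j - 1 then ⟨a, by have := a.isLt; omega⟩ else ⟨j, hj⟩)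

/-!
Write `Q_j = det M_{1..j} / det V_{1..j}`. In the minors of `M_{1..j+1}` obtained by deleting one
of the rows `j`, `j+1`, dropping the last column leaves the `j`-row matrix at argument `h⁻¹ u`,
dropping the first column leaves it at argument `h u` with row `a` scaled by `ζ_a`, and
dropping rows `j`, `j+1` and both columns leaves `M_{1..j-1}(u)` with the same scaling. So the
Desnanot–Jacobi identity for `M_{1..j+1}` is the relation for the numerators, up to the common
factor `ζ_1 ⋯ ζ_{j-1}`, and the same identity for `V_{1..j+1}` gives
`(ζ_{j+1} - ζ_j) V_{1..j} V_{1..j-1,j+1} = V_{1..j+1} V_{1..j-1}` for the denominators.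

Desnanot–Jacobi is the `2 × 2` case of Jacobi's theorem on minors of the adjugate: if `C` is
the identity with columns `c₁, c₂` replaced by columns `r₁, r₂` of `adj A`, then `A C` is `A`
with those columns replaced by `det A • e_{r₁}, det A • e_{r₂}`; comparing determinants gives
the identity times `det A`, which is cancelled on the generic matrix.
-/

namespace Matrix

variable {n R : Type*} [Fintype n] [DecidableEq n] [CommRing R]

theorem det_one_updateCol_updateCol {i j : n} (hij : i ≠ j) (v w : n → R) :
    det (((1 : Matrix n n R).updateCol i v).updateCol j w) = v i * w j - w i * v j := by
  set U : Matrix n (Fin 2) R := (of ![v - Pi.single i 1, w - Pi.single j 1])ᵀ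
  set V : Matrix (Fin 2) n R := of ![Pi.single i 1, Pi.single j 1]
  have hUV : ((1 : Matrix n n R).updateCol i v).updateCol j w = 1 + U * V := by
    ext r c
    simp only [updateCol_apply, U, V, add_apply, mul_apply, Fin.sum_univ_two, transpose_apply,
      of_apply, one_apply]
    split_ifs <;> simp_all
  rw [hUV, det_one_add_mul_comm, det_fin_two]
  simp [U, V, hij, hij.symm]

theorem det_mul_adjugate_minor_two {c₁ c₂ : n} (hc : c₁ ≠ c₂) (r₁ r₂ : n) (A : Matrix n n R) :
    det A * (adjugate A c₁ r₁ * adjugate A c₂ r₂ - adjugate A c₂ r₁ * adjugate A c₁ r₂) =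
      det A * (det A * det ((A.updateCol c₁ (Pi.single r₁ 1)).updateCol c₂ (Pi.single r₂ 1))) := by
  set C := ((1 : Matrix n n R).updateCol c₁ (adjugate A *ᵥ Pi.single r₁ 1)).updateCol c₂
    (adjugate A *ᵥ Pi.single r₂ 1)
  have hAC : A * C = (A.updateCol c₁ (det A • Pi.single r₁ 1)).updateCol c₂
      (det A • Pi.single r₂ 1) := by
    simp only [C, mul_updateCol, mul_one, mulVec_mulVec, mul_adjugate, smul_mulVec, one_mulVec]
  have hC : det C = adjugate A c₁ r₁ * adjugate A c₂ r₂ - adjugate A c₂ r₁ * adjugate A c₁ r₂ := by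
    rw [det_one_updateCol_updateCol hc]
    simp only [mulVec_single_one, col_apply]
    ring
  rw [← hC, ← det_mul, hAC, det_updateCol_smul, updateCol_comm _ hc, det_updateCol_smul,
    updateCol_comm _ hc.symm]

theorem adjugate_minor_two {c₁ c₂ : n} (hc : c₁ ≠ c₂) (r₁ r₂ : n) (A : Matrix n n R) :
    adjugate A c₁ r₁ * adjugate A c₂ r₂ - adjugate A c₂ r₁ * adjugate A c₁ r₂ =
      det A * det ((A.updateCol c₁ (Pi.single r₁ 1)).updateCol c₂ (Pi.single r₂ 1)) := by
  have hX := mul_left_cancel₀ (det_mvPolynomialX_ne_zero n ℤ)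
    (det_mul_adjugate_minor_two hc r₁ r₂ (mvPolynomialX n n ℤ))
  set f := MvPolynomial.aeval (R := ℤ) fun p : n × n ↦ A p.1 p.2
  have hf : (mvPolynomialX n n ℤ).map f = A := mvPolynomialX_mapMatrix_aeval ℤ A
  have hadj (c r : n) : f (adjugate (mvPolynomialX n n ℤ) c r) = adjugate A c r := by
    rw [← hf, ← AlgHom.mapMatrix_apply, ← AlgHom.map_adjugate]
    rfl
  have hsingle (r : n) : f ∘ Pi.single r 1 = Pi.single r 1 := by
    ext s
    simp [Pi.single_apply, apply_ite f]
  simpa [hadj, AlgHom.map_det, map_updateCol, hf, hsingle] using congrArg f hX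

theorem det_updateCol_single_one {m : ℕ} (A : Matrix (Fin (m + 1)) (Fin (m + 1)) R)
    (i j : Fin (m + 1)) :
    det (A.updateCol j (Pi.single i 1)) =
      (-1) ^ (i + j : ℕ) * det (A.submatrix i.succAbove j.succAbove) := by
  rw [det_succ_column _ j, Fintype.sum_eq_single i fun r hr => ?_]
  · simp
  · simp [Pi.single_eq_of_ne hr]

/-- `(Fin.last k).castSucc.succAbove` omits row `k`, `Fin.castSucc` omits row `k + 1`. -/
theorem desnanot_jacobi {k : ℕ} (A : Matrix (Fin (k + 2)) (Fin (k + 2)) R) :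
    det (A.submatrix (Fin.last k).castSucc.succAbove Fin.succ) *
        det (A.submatrix Fin.castSucc Fin.castSucc) -
      det (A.submatrix (Fin.last k).castSucc.succAbove Fin.castSucc) *
        det (A.submatrix Fin.castSucc Fin.succ) =
      det A * det (A.submatrix (Fin.castSucc ∘ Fin.castSucc) (Fin.castSucc ∘ Fin.succ)) := by
  have h := adjugate_minor_two (Fin.last_pos' (n := k + 1)).ne
    (Fin.last k).castSucc (Fin.last (k + 1)) A
  have hB : ((A.updateCol 0 (Pi.single (Fin.last k).castSucc 1)).updateCol (Fin.last (k + 1))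
      (Pi.single (Fin.last (k + 1)) 1)).det = (-1) ^ k *
        det (A.submatrix (Fin.castSucc ∘ Fin.castSucc) (Fin.castSucc ∘ Fin.succ)) := by
    have hsub : (A.updateCol 0 (Pi.single (Fin.last k).castSucc 1)).submatrix Fin.castSucc
        Fin.castSucc =
          (A.submatrix Fin.castSucc Fin.castSucc).updateCol 0 (Pi.single (Fin.last k) 1) := by
      ext i j
      simp [updateCol_apply, Pi.single_apply]
    rw [det_updateCol_single_one, Fin.succAbove_last, hsub, det_updateCol_single_one,
      submatrix_submatrix, Fin.succAbove_last, Fin.succAbove_zero]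
    simp only [Fin.val_last, Fin.val_zero, add_zero, ← two_mul, pow_mul, neg_one_sq, one_pow,
      one_mul]
  rw [hB] at h
  simp only [adjugate_fin_succ_eq_det_submatrix, Fin.succAbove_zero, Fin.succAbove_last,
    Fin.val_castSucc, Fin.val_last, Fin.val_zero, add_zero] at h
  rw [Even.neg_one_pow (n := k + 1 + (k + 1)) ⟨k + 1, rfl⟩,
    Odd.neg_one_pow (n := k + (k + 1)) ⟨k, by ring⟩, pow_succ] at h
  refine (isUnit_neg_one.pow k).mul_left_cancel ?_
  linear_combination h

theorem vandermonde_submatrix_castSucc {N : ℕ} (v : Fin (N + 1) → R) (r : Fin N → Fin (N + 1)) :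
    (vandermonde v).submatrix r Fin.castSucc = vandermonde (v ∘ r) := rfl

theorem vandermonde_submatrix_succ {N : ℕ} (v : Fin (N + 1) → R) (r : Fin N → Fin (N + 1)) :
    (vandermonde v).submatrix r Fin.succ = diagonal (v ∘ r) * vandermonde (v ∘ r) := by
  ext a b
  simp [vandermonde_apply, diagonal_mul, pow_succ']

theorem vandermonde_submatrix_castSucc_succ {N : ℕ} (v : Fin (N + 2) → R)
    (r : Fin N → Fin (N + 2)) :
    (vandermonde v).submatrix r (Fin.castSucc ∘ Fin.succ) =
      diagonal (v ∘ r) * vandermonde (v ∘ r) := by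
  ext a b
  simp [vandermonde_apply, diagonal_mul, pow_succ']

end Matrix

open Matrix

theorem Fin.prod_succAbove_castSucc_last {M : Type*} [CommMonoid M] {k : ℕ}
    (f : Fin (k + 2) → M) :
    ∏ i, f ((Fin.last k).castSucc.succAbove i) =
      (∏ i : Fin k, f i.castSucc.castSucc) * f (Fin.last (k + 1)) := by
  rw [Fin.prod_univ_castSucc]
  simp [Fin.succAbove_castSucc_of_lt]

theorem det_vandermonde_desnanot_jacobi {R : Type*} [CommRing R] [IsDomain R] {k : ℕ}
    (x : Fin (k + 2) → R) (hx : ∀ i, x i ≠ 0) :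
    (x (Fin.last (k + 1)) - x (Fin.last k).castSucc) *
        det (vandermonde (x ∘ (Fin.last k).castSucc.succAbove)) *
        det (vandermonde (x ∘ Fin.castSucc)) =
      det (vandermonde x) * det (vandermonde (x ∘ Fin.castSucc ∘ Fin.castSucc)) := by
  have hdj := desnanot_jacobi (vandermonde x)
  rw [vandermonde_submatrix_succ, vandermonde_submatrix_castSucc, vandermonde_submatrix_castSucc,
    vandermonde_submatrix_succ, vandermonde_submatrix_castSucc_succ, det_mul, det_mul, det_mul,
    det_diagonal, det_diagonal, det_diagonal] at hdj
  simp only [Function.comp_apply] at hdj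
  rw [Fin.prod_succAbove_castSucc_last, Fin.prod_univ_castSucc] at hdj
  refine mul_left_cancel₀ (a := ∏ i : Fin k, x i.castSucc.castSucc)
    (prod_ne_zero_iff.mpr fun _ _ => hx _) ?_
  linear_combination hdj

section QMatrix

variable {K : Type*} [Field K] {N : ℕ}

/-- The matrix `M(u)` of the rows with labels `z` and momenta `w`:
`Mdet ζ p h j row u = det (qMatrix h (ζ ∘ row) (p ∘ row) u)` holds by definition. -/
def qMatrix (h : K) (z w : Fin N → K) (u : K) : Matrix (Fin N) (Fin N) K :=
  of fun a b => z a ^ (b : ℕ) * (h ^ (-((N : ℤ) - 1 - 2 * ((b : ℕ) : ℤ))) * u - w a)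

variable {h : K}

theorem qMatrix_submatrix_castSucc (hh : h ≠ 0) (z w : Fin (N + 1) → K) (u : K)
    (r : Fin N → Fin (N + 1)) :
    (qMatrix h z w u).submatrix r Fin.castSucc = qMatrix h (z ∘ r) (w ∘ r) (h⁻¹ * u) := by
  ext a b
  simp only [qMatrix, submatrix_apply, of_apply, Function.comp_apply, Fin.val_castSucc]
  rw [← mul_assoc (h ^ _) h⁻¹ u, ← zpow_sub_one₀ hh]
  push_cast
  ring_nf

theorem qMatrix_submatrix_succ (hh : h ≠ 0) (z w : Fin (N + 1) → K) (u : K)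
    (r : Fin N → Fin (N + 1)) :
    (qMatrix h z w u).submatrix r Fin.succ =
      diagonal (z ∘ r) * qMatrix h (z ∘ r) (w ∘ r) (h * u) := by
  ext a b
  simp only [qMatrix, submatrix_apply, of_apply, Function.comp_apply, Fin.val_succ, diagonal_mul]
  rw [← mul_assoc (h ^ _) h u, ← zpow_add_one₀ hh]
  push_cast
  ring_nf

theorem qMatrix_submatrix_castSucc_succ (z w : Fin (N + 2) → K) (u : K)
    (r : Fin N → Fin (N + 2)) :
    (qMatrix h z w u).submatrix r (Fin.castSucc ∘ Fin.succ) =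
      diagonal (z ∘ r) * qMatrix h (z ∘ r) (w ∘ r) u := by
  ext a b
  simp only [qMatrix, submatrix_apply, of_apply, Function.comp_apply, Fin.val_succ,
    Fin.val_castSucc, diagonal_mul]
  push_cast
  ring_nf

theorem det_qMatrix_desnanot_jacobi {k : ℕ} (hh : h ≠ 0) (x w : Fin (k + 2) → K)
    (hx : ∀ i, x i ≠ 0) (u : K) :
    x (Fin.last (k + 1)) *
        det (qMatrix h (x ∘ (Fin.last k).castSucc.succAbove) (w ∘ (Fin.last k).castSucc.succAbove)
          (h * u)) * det (qMatrix h (x ∘ Fin.castSucc) (w ∘ Fin.castSucc) (h⁻¹ * u)) -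
      x (Fin.last k).castSucc *
        det (qMatrix h (x ∘ (Fin.last k).castSucc.succAbove) (w ∘ (Fin.last k).castSucc.succAbove)
          (h⁻¹ * u)) * det (qMatrix h (x ∘ Fin.castSucc) (w ∘ Fin.castSucc) (h * u)) =
      det (qMatrix h x w u) *
        det (qMatrix h (x ∘ Fin.castSucc ∘ Fin.castSucc) (w ∘ Fin.castSucc ∘ Fin.castSucc) u) := by
  have hdj := desnanot_jacobi (qMatrix h x w u)
  rw [qMatrix_submatrix_succ hh, qMatrix_submatrix_castSucc hh, qMatrix_submatrix_castSucc hh,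
    qMatrix_submatrix_succ hh, qMatrix_submatrix_castSucc_succ, det_mul, det_mul, det_mul,
    det_diagonal, det_diagonal, det_diagonal] at hdj
  simp only [Function.comp_apply] at hdj
  rw [Fin.prod_succAbove_castSucc_last, Fin.prod_univ_castSucc] at hdj
  refine mul_left_cancel₀ (a := ∏ i : Fin k, x i.castSucc.castSucc)
    (prod_ne_zero_iff.mpr fun _ _ => hx _) ?_
  linear_combination hdj

/-- `Qfun ζ p h j hj = qRatio h (ζ ∘ Fin.castLE hj) (p ∘ Fin.castLE hj)` holds by definition. -/
noncomputable def qRatio (h : K) (x w : Fin N → K) (u : K) : K :=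
  det (qMatrix h x w u) / det (vandermonde x)

theorem qRatio_qqTilde {k : ℕ} (hh : h ≠ 0) (x w : Fin (k + 2) → K) (hx : Function.Injective x)
    (hx0 : ∀ i, x i ≠ 0) (u : K) :
    x (Fin.last (k + 1)) * qRatio h (x ∘ Fin.castSucc) (w ∘ Fin.castSucc) (h⁻¹ * u) *
        qRatio h (x ∘ (Fin.last k).castSucc.succAbove) (w ∘ (Fin.last k).castSucc.succAbove)
          (h * u) -
      x (Fin.last k).castSucc * qRatio h (x ∘ Fin.castSucc) (w ∘ Fin.castSucc) (h * u) *
        qRatio h (x ∘ (Fin.last k).castSucc.succAbove) (w ∘ (Fin.last k).castSucc.succAbove)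
          (h⁻¹ * u) =
      (x (Fin.last (k + 1)) - x (Fin.last k).castSucc) *
        qRatio h (x ∘ Fin.castSucc ∘ Fin.castSucc) (w ∘ Fin.castSucc ∘ Fin.castSucc) u *
        qRatio h x w u := by
  have hV {M : ℕ} (r : Fin M → Fin (k + 2)) (hr : Function.Injective r) :
      det (vandermonde (x ∘ r)) ≠ 0 :=
    det_vandermonde_ne_zero_iff.mpr (hx.comp hr)
  have hVs := hV _ (Fin.castSucc_injective _)
  have hVt := hV _ (Fin.succAbove_right_injective (p := (Fin.last k).castSucc))
  have hVm := hV _ ((Fin.castSucc_injective _).comp (Fin.castSucc_injective _))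
  have hVJ : det (vandermonde x) ≠ 0 := det_vandermonde_ne_zero_iff.mpr hx
  have hM := det_qMatrix_desnanot_jacobi hh x w hx0 u
  have hVdj := det_vandermonde_desnanot_jacobi x hx0
  simp only [qRatio]
  field_simp at hM ⊢
  rw [hM, mul_assoc, mul_comm (det (vandermonde (x ∘ Fin.castSucc ∘ Fin.castSucc))), ← hVdj]
  ring

end QMatrix

/-- The QQ̃-relation ζ_{j+1} Q_j^{(1)} Q̃_j^{(−1)} − ζ_j Q_j^{(−1)} Q̃_j^{(1)}
= (ζ_{j+1} − ζ_j) Q_{j−1} Q_{j+1} (with 1-based labels, Q_0 = 1). -/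
theorem stmt9 {K : Type*} [Field K] (n : ℕ) (ζ p : Fin n → K) (h : K) (hh : h ≠ 0)
    (hζ : Function.Injective ζ) (hζ0 : ∀ i, ζ i ≠ 0)
    (j : ℕ) (hj1 : 1 ≤ j) (hj2 : j ≤ n - 1) (u : K) :
    ζ ⟨j, by omega⟩ * Qfun ζ p h j (by omega) (h⁻¹ * u) * Qtfun ζ p h j (by omega) (h * u)
  - ζ ⟨j - 1, by omega⟩ * Qfun ζ p h j (by omega) (h * u) *
      Qtfun ζ p h j (by omega) (h⁻¹ * u)
  = (ζ ⟨j, by omega⟩ - ζ ⟨j - 1, by omega⟩) *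
      Qfun ζ p h (j - 1) (by omega) u * Qfun ζ p h (j + 1) (by omega) u := by
  obtain ⟨k, rfl⟩ : ∃ k, j = k + 1 := ⟨j - 1, by omega⟩
  have hk : k + 2 ≤ n := by omega
  have hrow : (fun a : Fin (k + 1) => if (a : ℕ) < k + 1 - 1 then (⟨a, by omega⟩ : Fin n)
      else ⟨k + 1, by omega⟩) = Fin.castLE hk ∘ (Fin.last k).castSucc.succAbove := by
    funext a
    ext
    simp only [Function.comp_apply, Fin.val_castLE, Fin.succAbove, Fin.lt_def, Fin.val_castSucc,
      Fin.val_last, apply_ite Fin.val, Fin.val_succ]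
    split_ifs <;> omega
  have hQt (v : K) : Qtfun ζ p h (k + 1) (by omega) v = qRatio h (ζ ∘ Fin.castLE hk ∘
      (Fin.last k).castSucc.succAbove) (p ∘ Fin.castLE hk ∘ (Fin.last k).castSucc.succAbove) v := by
    rw [Qtfun, hrow]
    rfl
  simp only [Nat.add_sub_cancel, hQt]
  exact qRatio_qqTilde hh (ζ ∘ Fin.castLE hk) (p ∘ Fin.castLE hk)
    (hζ.comp (Fin.castLE_injective hk)) (fun _ => hζ0 _) u
end

section
/- Let Q_{i−1}, Q_i, Q_{i+1} be monic polynomials of degrees i−1, i, i+1 over a field, let 𝔷_i, 𝔷_{i+1} be nonzero scalars, and define 𝔭_{i+1} = −Q_{i+1}(0)/Q_i(0) (assuming Q_i(0), Q_{i−1}(0) ≠ 0). Suppose the qq-Toda relation Q_{i+1}(u) − (𝔷_{i+1}/𝔷_i) Q_{i−1}(u) · u · 𝔭_{i+1} = Q_i(u) Q̃_i(u) holds for some polynomial Q̃_i. Then Q̃_i is monic of degree one, and evaluating at any root s of Q_i with Q_{i−1}(s) ≠ 0 gives Q_{i+1}(s)/Q_{i−1}(s) = (𝔷_{i+1}/𝔷_i)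 · s · 𝔭_{i+1}. -/
/-!
Since `deg Q_{i-1} + 1 = i < i + 1 = deg Q_{i+1}`, subtracting the term `c · X · Q_{i-1}` does not
touch the leading coefficient of `Q_{i+1}`; so `Q_i · Q̃_i` is monic of degree `i + 1`, which forces
the cofactor `Q̃_i` to be monic of degree one. Evaluating the relation at a root of `Q_i` kills the
right-hand side.
-/

open Polynomial

namespace Polynomial

theorem natDegree_C_mul_X_mul_le {R : Type*} [Semiring R] (c : R) (p : R[X]) :
    (C c * X * p).natDegree ≤ p.natDegree + 1 :=
  calc (C c * X * p).natDegree ≤ (X * p).natDegree := by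
        rw [mul_assoc]; exact natDegree_C_mul_le c _
    _ ≤ X.natDegree + p.natDegree := natDegree_mul_le
    _ ≤ p.natDegree + 1 := by rw [add_comm]; gcongr; exact natDegree_X_le

theorem Monic.sub_C_mul_X_mul {R : Type*} [Ring R] {p q : R[X]} (hp : p.Monic)
    (hq : q.natDegree + 1 < p.natDegree) (c : R) :
    (p - C c * X * q).Monic ∧ (p - C c * X * q).natDegree = p.natDegree := by
  have hlt : (C c * X * q).natDegree < p.natDegree :=
    (natDegree_C_mul_X_mul_le c q).trans_lt hq
  exact ⟨hp.sub_of_left (degree_lt_degree hlt), natDegree_sub_eq_left_of_natDegree_lt hlt⟩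

theorem Monic.of_mul_eq_monic {R : Type*} [Semiring R] {p q r : R[X]} (hp : p.Monic)
    (hr : r.Monic) (h : p * q = r) : q.Monic ∧ p.natDegree + q.natDegree = r.natDegree := by
  subst h
  have hq : q.Monic := hp.of_mul_monic_left hr
  exact ⟨hq, (hp.natDegree_mul hq).symm⟩

theorem eval_div_eval_eq_of_sub_C_mul_X_mul_eq_mul {K : Type*} [Field K]
    {Qm Qi Qp Qt : K[X]} {c s : K} (h : Qp - C c * X * Qm = Qi * Qt)
    (hs : Qi.eval s = 0) (hm : Qm.eval s ≠ 0) : Qp.eval s / Qm.eval s = c * s := by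
  have hQp : Qp.eval s = c * s * Qm.eval s := by
    simpa [hs, sub_eq_zero] using congrArg (eval s) h
  rw [hQp, mul_div_cancel_right₀ _ hm]

end Polynomial

theorem stmt11_general {K : Type*} [Field K] (i : ℕ) (hi : 1 ≤ i)
    (Qm Qi Qp Qt : Polynomial K)
    (hQiM : Qi.Monic) (hQpM : Qp.Monic)
    (hdm : Qm.natDegree = i - 1) (hdi : Qi.natDegree = i) (hdp : Qp.natDegree = i + 1)
    (z1 z2 : K)
    (𝔭 : K)
    (hrel : Qp - Polynomial.C (z2 / z1 * 𝔭) * Polynomial.X * Qm = Qi * Qt) :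
    (Qt.Monic ∧ Qt.degree = 1)
  ∧ ∀ s : K, Qi.eval s = 0 → Qm.eval s ≠ 0 →
      Qp.eval s / Qm.eval s = (z2 / z1) * s * 𝔭 := by
  obtain ⟨hLHSM, hLHSd⟩ := hQpM.sub_C_mul_X_mul (q := Qm) (by omega) (z2 / z1 * 𝔭)
  rw [hrel] at hLHSM hLHSd
  obtain ⟨hQtM, hdeg⟩ := hQiM.of_mul_eq_monic hLHSM rfl
  have hQtd : Qt.natDegree = 1 := by omega
  refine ⟨⟨hQtM, by rw [degree_eq_natDegree hQtM.ne_zero, hQtd]; rfl⟩, fun s hs hm => ?_⟩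
  rw [eval_div_eval_eq_of_sub_C_mul_X_mul_eq_mul hrel hs hm, mul_right_comm]

/-- The q-Toda QQ̃-relation: if Q_{i+1} − (𝔷_{i+1}/𝔷_i)·𝔭_{i+1}·X·Q_{i−1} = Q_i·Q̃_i
with Q_{i−1}, Q_i, Q_{i+1} monic of degrees i−1, i, i+1 and
𝔭_{i+1} = −Q_{i+1}(0)/Q_i(0), then Q̃_i is monic of degree 1, and at any root s of
Q_i with Q_{i−1}(s) ≠ 0 we get Q_{i+1}(s)/Q_{i−1}(s) = (𝔷_{i+1}/𝔷_i)·s·𝔭_{i+1}. -/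
theorem stmt11 {K : Type*} [Field K] (i : ℕ) (hi : 1 ≤ i)
    (Qm Qi Qp Qt : Polynomial K)
    (hQmM : Qm.Monic) (hQiM : Qi.Monic) (hQpM : Qp.Monic)
    (hdm : Qm.natDegree = i - 1) (hdi : Qi.natDegree = i) (hdp : Qp.natDegree = i + 1)
    (z1 z2 : K) (hz1 : z1 ≠ 0) (hz2 : z2 ≠ 0)
    (h0i : Qi.eval 0 ≠ 0) (h0m : Qm.eval 0 ≠ 0)
    (𝔭 : K) (h𝔭 : 𝔭 = -Qp.eval 0 / Qi.eval 0)
    (hrel : Qp - Polynomial.C (z2 / z1 * 𝔭) * Polynomial.X * Qm = Qi * Qt) :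
    (Qt.Monic ∧ Qt.degree = 1)
  ∧ ∀ s : K, Qi.eval s = 0 → Qm.eval s ≠ 0 →
      Qp.eval s / Qm.eval s = (z2 / z1) * s * 𝔭 :=
  stmt11_general i hi Qm Qi Qp Qt hQiM hQpM hdm hdi hdp z1 z2 𝔭 hrel
end

section
/- Let t be invertible and ζ_1,…,ζ_n pairwise distinct and nonzero in a field K. For any subset I ⊂ {1,…,n} with |I| = r, the coefficient of ∏_{k∈I} p_k in the r-th elementary symmetric function of the eigenvalues of the tRS Lax matrix L (equivalently, in Tr Λ^r L, the sum of principal r×r minors of L) equals ∏_{i ∈ I, j ∉ I} (t^{−1}ζ_i − t ζ_j)/(ζ_i − ζ_j). In particular Tr Λ^r L, a priori a rational function with possible poles at ζ_i = ζ_j for i, j ∈ I, has no such poles. -/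
open Finset

/-- The tRS Lax matrix with the momenta p_j promoted to polynomial variables X j. -/
noncomputable def tRSLaxMv {K : Type*} [Field K] (n : ℕ) (ζ : Fin n → K) (t : K) :
    Matrix (Fin n) (Fin n) (MvPolynomial (Fin n) K) :=
  Matrix.of fun i j =>
    MvPolynomial.C ((∏ k ∈ univ.erase j, (t⁻¹ * ζ i - t * ζ k)) /
      (∏ k ∈ univ.erase i, (ζ i - ζ k))) * MvPolynomial.X j

/-- Tr Λ^r L = sum of principal r×r minors of L. -/
noncomputable def trLambda {K : Type*} [Field K] (n : ℕ) (ζ : Fin n → K) (t : K)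
    (r : ℕ) : MvPolynomial (Fin n) K :=
  ∑ I ∈ powersetCard r (univ : Finset (Fin n)),
    Matrix.det (Matrix.of fun a b : {x : Fin n // x ∈ I} => tRSLaxMv n ζ t a.1 b.1)

open Polynomial in
lemma detB {K : Type*} [Field K] (r : ℕ) (u v : Fin r → K) (hv : Function.Injective v) :
    Matrix.det (Matrix.of fun i j : Fin r => ∏ k ∈ univ.erase j, (u i - v k))
      = (∏ i : Fin r, ∏ j ∈ Ioi i, (u j - u i)) *
        (∏ j : Fin r, ∏ k ∈ univ.erase j, (v j - v k)) /
        (∏ i : Fin r, ∏ j ∈ Ioi i, (v j - v i)) := by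
  rcases Nat.eq_zero_or_pos r with hr | hr
  · subst hr
    simp [Matrix.det_isEmpty]
  -- coefficient matrix
  set M : Matrix (Fin r) (Fin r) K :=
    Matrix.of fun m j => (∏ k ∈ univ.erase j, (X - C (v k))).coeff m with hM
  have key : ∀ w : Fin r → K,
      (Matrix.of fun i j : Fin r => ∏ k ∈ univ.erase j, (w i - v k))
        = Matrix.vandermonde w * M := by
    intro w
    ext i j
    have hdeg : (∏ k ∈ univ.erase j, (X - C (v k))).natDegree < r := by
      rw [natDegree_prod_of_monic _ _ (fun k _ => monic_X_sub_C (v k))]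
      simp only [natDegree_X_sub_C, Finset.sum_const, smul_eq_mul, mul_one]
      rw [card_erase_of_mem (mem_univ j), card_univ, Fintype.card_fin]
      omega
    have := eval_eq_sum_range' hdeg (w i)
    rw [eval_prod] at this
    simp only [eval_sub, eval_X, eval_C] at this
    rw [Matrix.mul_apply, Matrix.of_apply, this, Finset.sum_range]
    simp [hM, Matrix.vandermonde, mul_comm]
  have hdM : ∀ w : Fin r → K,
      Matrix.det (Matrix.of fun i j : Fin r => ∏ k ∈ univ.erase j, (w i - v k))
        = (∏ i : Fin r, ∏ j ∈ Ioi i, (w j - w i)) * M.det := by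
    intro w
    rw [key w, Matrix.det_mul, Matrix.det_vandermonde]
  have hdiag : (Matrix.of fun i j : Fin r => ∏ k ∈ univ.erase j, (v i - v k))
      = Matrix.diagonal (fun j => ∏ k ∈ univ.erase j, (v j - v k)) := by
    ext i j
    by_cases h : i = j
    · subst h; simp [Matrix.diagonal]
    · rw [Matrix.diagonal_apply_ne _ h, Matrix.of_apply]
      exact Finset.prod_eq_zero (Finset.mem_erase.2 ⟨h, mem_univ i⟩) (sub_self (v i))
  have hvd : (∏ i : Fin r, ∏ j ∈ Ioi i, (v j - v i)) ≠ 0 := by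
    apply Finset.prod_ne_zero_iff.2
    intro i _
    apply Finset.prod_ne_zero_iff.2
    intro j hj
    exact sub_ne_zero.2 fun h => (mem_Ioi.1 hj).ne' (hv h)
  have hMdet : M.det = (∏ j : Fin r, ∏ k ∈ univ.erase j, (v j - v k)) /
      (∏ i : Fin r, ∏ j ∈ Ioi i, (v j - v i)) := by
    have := hdM v
    rw [hdiag, Matrix.det_diagonal] at this
    field_simp
    rw [this]; ring
  rw [hdM u, hMdet, mul_div_assoc]

lemma offdiag_pair {M : Type*} [CommMonoid M] {r : ℕ} (g : Fin r → Fin r → M) :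
    ∏ j : Fin r, ∏ k ∈ univ.erase j, g j k
      = ∏ i : Fin r, ∏ j ∈ Ioi i, (g j i * g i j) := by
  have h1 : ∀ j : Fin r, univ.erase j = Iio j ∪ Ioi j := by
    intro j; ext k
    simp only [mem_erase, mem_univ, and_true, mem_union, mem_Iio, mem_Ioi]
    exact ⟨lt_or_gt_of_ne, fun h => h.elim ne_of_lt ne_of_gt⟩
  have h2 : ∀ j : Fin r, Disjoint (Iio j) (Ioi j) := by
    intro j
    rw [Finset.disjoint_left]
    intro k hk hk'
    exact absurd (lt_trans (mem_Iio.1 hk) (mem_Ioi.1 hk')) (lt_irrefl k)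
  calc ∏ j : Fin r, ∏ k ∈ univ.erase j, g j k
      = ∏ j : Fin r, ((∏ k ∈ Iio j, g j k) * ∏ k ∈ Ioi j, g j k) := by
        refine Finset.prod_congr rfl fun j _ => ?_
        rw [h1 j, Finset.prod_union (h2 j)]
    _ = (∏ j : Fin r, ∏ k ∈ Iio j, g j k) * ∏ j : Fin r, ∏ k ∈ Ioi j, g j k := by
        rw [Finset.prod_mul_distrib]
    _ = (∏ i : Fin r, ∏ j ∈ Ioi i, g j i) * ∏ i : Fin r, ∏ j ∈ Ioi i, g i j := by
        congr 1
        refine Finset.prod_comm' ?_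
        intro j k; simp [mem_Iio, mem_Ioi]
    _ = _ := by rw [← Finset.prod_mul_distrib]; simp [Finset.prod_mul_distrib]

lemma split_erase {K : Type*} [CommRing K] {n : ℕ} (I : Finset (Fin n)) {b : Fin n}
    (hb : b ∈ I) (f : Fin n → K) :
    ∏ k ∈ univ.erase b, f k = (∏ k ∈ Iᶜ, f k) * ∏ k ∈ I.erase b, f k := by
  rw [← Finset.prod_union]
  · congr 1
    ext k
    simp only [mem_erase, mem_univ, and_true, mem_union, mem_compl]
    constructor
    · intro hk
      by_cases hkI : k ∈ I
      · exact Or.inr ⟨hk, hkI⟩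
      · exact Or.inl hkI
    · rintro (h | h)
      · exact fun e => h (e ▸ hb)
      · exact h.1
  · rw [Finset.disjoint_left]
    intro k hk hk'
    exact (mem_compl.1 hk) (mem_of_mem_erase hk')

lemma reindex_erase {K : Type*} [CommMonoid K] {n : ℕ} (I : Finset (Fin n))
    (e : Fin I.card ≃ {x // x ∈ I}) (f : Fin n → K) (j : Fin I.card) :
    ∏ k ∈ univ.erase j, f (e k).1 = ∏ k ∈ I.erase (e j).1, f k := by
  refine Finset.prod_bij (fun k _ => (e k).1) ?_ ?_ ?_ ?_
  · intro k hk
    refine mem_erase.2 ⟨fun h => (mem_erase.1 hk).1 ?_, (e k).2⟩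
    exact e.injective (Subtype.ext h)
  · intro a ha b hb h
    exact e.injective (Subtype.ext h)
  · intro b hb
    refine ⟨e.symm ⟨b, mem_of_mem_erase hb⟩, mem_erase.2 ⟨fun h => ?_, mem_univ _⟩, by simp⟩
    apply (mem_erase.1 hb).1
    have := congrArg (fun x => ((e x : {x // x ∈ I}) : Fin n)) h
    simpa using this
  · intro a ha; rfl

lemma detC {K : Type*} [Field K] {n : ℕ} (ζ : Fin n → K) (t : K)
    (hζ : Function.Injective ζ) (ht : t ≠ 0) (I : Finset (Fin n)) :
    Matrix.det (Matrix.of fun a b : {x : Fin n // x ∈ I} =>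
      (∏ k ∈ univ.erase b.1, (t⁻¹ * ζ a.1 - t * ζ k)) /
        (∏ k ∈ univ.erase a.1, (ζ a.1 - ζ k)))
      = ∏ i ∈ I, ∏ j ∈ Iᶜ, ((t⁻¹ * ζ i - t * ζ j) / (ζ i - ζ j)) := by
  classical
  set e : Fin I.card ≃ {x : Fin n // x ∈ I} := I.equivFin.symm with he
  set u : Fin I.card → K := fun i => t⁻¹ * ζ (e i).1 with hu
  set v : Fin I.card → K := fun k => t * ζ (e k).1 with hv
  have hvinj : Function.Injective v := by
    intro a b h
    apply e.injective
    exact Subtype.ext (hζ (mul_left_cancel₀ ht h))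
  set s : Fin I.card → K := fun i =>
    (∏ k ∈ Iᶜ, (t⁻¹ * ζ (e i).1 - t * ζ k)) /
      (∏ k ∈ univ.erase (e i).1, (ζ (e i).1 - ζ k)) with hs
  set B : Matrix (Fin I.card) (Fin I.card) K :=
    Matrix.of fun i j => ∏ k ∈ univ.erase j, (u i - v k) with hB
  rw [← Matrix.det_submatrix_equiv_self e]
  have hentry : (Matrix.of fun a b : {x : Fin n // x ∈ I} =>
      (∏ k ∈ univ.erase b.1, (t⁻¹ * ζ a.1 - t * ζ k)) /
        (∏ k ∈ univ.erase a.1, (ζ a.1 - ζ k))).submatrix e e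
      = Matrix.of fun i j => s i * B i j := by
    ext i j
    simp only [Matrix.submatrix_apply, Matrix.of_apply, hs, hB, hu, hv]
    rw [split_erase I (e j).2 (fun k => t⁻¹ * ζ (e i).1 - t * ζ k),
      ← reindex_erase I e (fun k => t⁻¹ * ζ (e i).1 - t * ζ k) j]
    rw [mul_div_right_comm]
  rw [hentry, Matrix.det_mul_column s B]
  -- determinant of B
  have hVv : (∏ i : Fin I.card, ∏ j ∈ Ioi i, (v j - v i)) ≠ 0 := by
    refine Finset.prod_ne_zero_iff.2 fun i _ => Finset.prod_ne_zero_iff.2 fun j hj => ?_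
    exact sub_ne_zero.2 fun h => (mem_Ioi.1 hj).ne' (hvinj h)
  have hBdet : B.det = ∏ j : Fin I.card, ∏ k ∈ univ.erase j, (ζ (e j).1 - ζ (e k).1) := by
    rw [hB, detB I.card u v hvinj, offdiag_pair (fun j k => v j - v k)]
    have h1 : ∏ i : Fin I.card, ∏ j ∈ Ioi i, ((v j - v i) * (v i - v j))
        = (∏ i : Fin I.card, ∏ j ∈ Ioi i, (v j - v i)) *
          (∏ i : Fin I.card, ∏ j ∈ Ioi i, (v i - v j)) := by
      rw [← Finset.prod_mul_distrib]
      exact Finset.prod_congr rfl fun i _ => Finset.prod_mul_distrib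
    rw [h1, offdiag_pair (fun j k => ζ (e j).1 - ζ (e k).1)]
    have h2 : ∀ i j : Fin I.card, (u j - u i) * (v i - v j)
        = (ζ (e j).1 - ζ (e i).1) * (ζ (e i).1 - ζ (e j).1) := by
      intro i j
      simp only [hu, hv]
      field_simp
    calc (∏ i : Fin I.card, ∏ j ∈ Ioi i, (u j - u i)) *
          ((∏ i : Fin I.card, ∏ j ∈ Ioi i, (v j - v i)) *
            (∏ i : Fin I.card, ∏ j ∈ Ioi i, (v i - v j))) /
          (∏ i : Fin I.card, ∏ j ∈ Ioi i, (v j - v i))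
        = (∏ i : Fin I.card, ∏ j ∈ Ioi i, (u j - u i)) *
          (∏ i : Fin I.card, ∏ j ∈ Ioi i, (v i - v j)) := by
          field_simp
      _ = ∏ i : Fin I.card, ∏ j ∈ Ioi i, ((u j - u i) * (v i - v j)) := by
          rw [← Finset.prod_mul_distrib]
          exact (Finset.prod_congr rfl fun i _ => Finset.prod_mul_distrib.symm)
      _ = ∏ i : Fin I.card, ∏ j ∈ Ioi i,
            ((ζ (e j).1 - ζ (e i).1) * (ζ (e i).1 - ζ (e j).1)) := by
          exact Finset.prod_congr rfl fun i _ => Finset.prod_congr rfl fun j _ => h2 i j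
  rw [hBdet, ← Finset.prod_mul_distrib]
  have hterm : ∀ i : Fin I.card,
      s i * ∏ k ∈ univ.erase i, (ζ (e i).1 - ζ (e k).1)
        = ∏ j ∈ Iᶜ, ((t⁻¹ * ζ (e i).1 - t * ζ j) / (ζ (e i).1 - ζ j)) := by
    intro i
    rw [reindex_erase I e (fun k => ζ (e i).1 - ζ k) i]
    have hP : (∏ k ∈ I.erase (e i).1, (ζ (e i).1 - ζ k)) ≠ 0 := by
      refine Finset.prod_ne_zero_iff.2 fun k hk => ?_
      exact sub_ne_zero.2 fun h => (mem_erase.1 hk).1 (hζ h).symm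
    have hDc : (∏ k ∈ Iᶜ, (ζ (e i).1 - ζ k)) ≠ 0 := by
      refine Finset.prod_ne_zero_iff.2 fun k hk => ?_
      exact sub_ne_zero.2 fun h => (mem_compl.1 hk) ((hζ h) ▸ (e i).2)
    rw [hs]
    simp only []
    rw [split_erase I (e i).2 (fun k => ζ (e i).1 - ζ k), Finset.prod_div_distrib]
    field_simp
  rw [Finset.prod_congr rfl (fun i _ => hterm i)]
  rw [Equiv.prod_comp e (fun a : {x : Fin n // x ∈ I} =>
    ∏ j ∈ Iᶜ, ((t⁻¹ * ζ a.1 - t * ζ j) / (ζ a.1 - ζ j)))]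
  exact Finset.prod_coe_sort I (fun a => ∏ j ∈ Iᶜ, ((t⁻¹ * ζ a - t * ζ j) / (ζ a - ζ j)))

lemma msum_apply {n : ℕ} (J : Finset (Fin n)) (k : Fin n) :
    (∑ b ∈ J, Finsupp.single b (1 : ℕ)) k = if k ∈ J then 1 else 0 := by
  classical
  rw [Finsupp.finset_sum_apply]
  simp [Finsupp.single_apply]

lemma msum_support {n : ℕ} (J : Finset (Fin n)) :
    (∑ b ∈ J, Finsupp.single b (1 : ℕ)).support = J := by
  ext k
  rw [Finsupp.mem_support_iff, msum_apply]
  by_cases h : k ∈ J <;> simp [h]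

lemma det_eq_monomial {K : Type*} [Field K] {n : ℕ} (ζ : Fin n → K) (t : K)
    (J : Finset (Fin n)) :
    Matrix.det (Matrix.of fun a b : {x : Fin n // x ∈ J} => tRSLaxMv n ζ t a.1 b.1)
      = MvPolynomial.monomial (∑ k ∈ J, Finsupp.single k 1)
          (Matrix.det (Matrix.of fun a b : {x : Fin n // x ∈ J} =>
            (∏ k ∈ univ.erase b.1, (t⁻¹ * ζ a.1 - t * ζ k)) /
              (∏ k ∈ univ.erase a.1, (ζ a.1 - ζ k)))) := by
  classical
  set c : {x : Fin n // x ∈ J} → {x : Fin n // x ∈ J} → K := fun a b =>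
    (∏ k ∈ univ.erase b.1, (t⁻¹ * ζ a.1 - t * ζ k)) /
      (∏ k ∈ univ.erase a.1, (ζ a.1 - ζ k)) with hc
  have h1 : (Matrix.of fun a b : {x : Fin n // x ∈ J} => tRSLaxMv n ζ t a.1 b.1)
      = (Matrix.of fun a b : {x : Fin n // x ∈ J} => (MvPolynomial.C (c a b) :
          MvPolynomial (Fin n) K)) *
        Matrix.diagonal (fun b : {x : Fin n // x ∈ J} => MvPolynomial.X b.1) := by
    ext a b
    rw [Matrix.mul_diagonal]
    simp [tRSLaxMv, hc]
  rw [h1, Matrix.det_mul, Matrix.det_diagonal]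
  have h2 : (Matrix.of fun a b : {x : Fin n // x ∈ J} => (MvPolynomial.C (c a b) :
        MvPolynomial (Fin n) K)).det
      = MvPolynomial.C (Matrix.det (Matrix.of c)) := by
    rw [RingHom.map_det]
    congr 1
  rw [h2]
  have h3 : ∏ b : {x : Fin n // x ∈ J}, (MvPolynomial.X b.1 : MvPolynomial (Fin n) K)
      = ∏ b ∈ J, MvPolynomial.X b := Finset.prod_coe_sort J _
  rw [h3, MvPolynomial.monomial_eq]
  congr 1
  rw [Finsupp.prod, msum_support]
  refine Finset.prod_congr rfl fun k hk => ?_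
  rw [msum_apply, if_pos hk, pow_one]


/-- The coefficient of ∏_{k∈I} p_k in Tr Λ^r L equals
∏_{i∈I, j∉I} (t⁻¹ζ_i − tζ_j)/(ζ_i − ζ_j); in particular there are no poles at
ζ_i = ζ_j for i, j ∈ I. -/
theorem stmt16 {K : Type*} [Field K] (n : ℕ) (ζ : Fin n → K) (t : K)
    (hζ : Function.Injective ζ) (hζ0 : ∀ i, ζ i ≠ 0) (ht : t ≠ 0)
    (r : ℕ) (I : Finset (Fin n)) (hI : I.card = r) :
    (trLambda n ζ t r).coeff (∑ k ∈ I, Finsupp.single k 1)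
      = ∏ i ∈ I, ∏ j ∈ Iᶜ, ((t⁻¹ * ζ i - t * ζ j) / (ζ i - ζ j)) := by
  classical
  rw [trLambda, MvPolynomial.coeff_sum]
  have step : ∀ J ∈ powersetCard r (univ : Finset (Fin n)),
      (MvPolynomial.coeff (∑ k ∈ I, Finsupp.single k 1)
        (Matrix.det (Matrix.of fun a b : {x : Fin n // x ∈ J} => tRSLaxMv n ζ t a.1 b.1)))
      = if J = I then
          Matrix.det (Matrix.of fun a b : {x : Fin n // x ∈ J} =>
            (∏ k ∈ univ.erase b.1, (t⁻¹ * ζ a.1 - t * ζ k)) /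
              (∏ k ∈ univ.erase a.1, (ζ a.1 - ζ k))) else 0 := by
    intro J _
    rw [det_eq_monomial, MvPolynomial.coeff_monomial]
    congr 1
    simp only [eq_iff_iff]
    constructor
    · intro h
      rw [← msum_support J, h, msum_support I]
    · intro h; rw [h]
  rw [Finset.sum_congr rfl step, Finset.sum_ite_eq' (powersetCard r (univ : Finset (Fin n)))]
  rw [if_pos (mem_powersetCard_univ.2 hI)]
  exact detC ζ t hζ ht I
end
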